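/- arXiv:2405.03861 — 10 statements merged into one kernel-verified Lean document; each statement's English description precedes it below -/
import Mathlib

section
/- Let F : ℝⁿ × ℝᴺ → ℝⁿ be continuously differentiable, let X : Ω → ℝⁿ be an equilibrium branch on an open set Ω ⊆ ℝᴺ with invertible Jacobian J(I) for every I ∈ Ω, let φ : ℝⁿ → ℝ be continuously differentiable, and let z = φ ∘ X be the associated input-output function. Then for every M ∈ {1,…,N} and I ∈ Ω, ∂z/∂I_M(I) = −(1/det J(I)) · ⟨∇φ(X(I)), adj(J(I)) · F_{I_M}(X(I), I)⟩. Consequently, I₀ ∈ Ω is a point of infinitesimal homeostasis (∇z(I₀) = 0) if and only if ⟨∇φ(X(I₀)), adj(J(I₀)) · F_{I_M}(X(I₀), I₀)⟩ = 0 for all M = 1,…,N. -/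
open Matrix Filter Topology

/-!
Differentiating the equilibrium identity `F (X I, I) = 0` along `e_M` gives
`J(I) · ∂X/∂I_M = -F_{I_M}`, so Cramer's rule `J⁻¹ = adj J / det J` yields `∂X/∂I_M`, and the chain
rule for `z = φ ∘ X` gives the formula. Since `det J(I₀) ≠ 0`, the prefactor `-1 / det J(I₀)`
never vanishes, whence the characterization of homeostasis points.
-/

section ImplicitDifferentiation

variable {𝕜 E P G : Type*} [NontriviallyNormedField 𝕜]
  [NormedAddCommGroup E] [NormedSpace 𝕜 E] [NormedAddCommGroup P] [NormedSpace 𝕜 P]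
  [NormedAddCommGroup G] [NormedSpace 𝕜 G]

theorem HasFDerivAt.apply_prod_zero_eq_neg_of_eventually_eq_zero
    {F : E × P → G} {F' : E × P →L[𝕜] G} {x : P → E} {x' : P →L[𝕜] E} {p : P}
    (hF : HasFDerivAt F F' (x p, p)) (hx : HasFDerivAt x x' p)
    (hzero : ∀ᶠ q in 𝓝 p, F (x q, q) = 0) (v : P) :
    F' (x' v, 0) = -F' (0, v) := by
  have hcomp : HasFDerivAt (fun q => F (x q, q)) (F'.comp (x'.prod (.id 𝕜 P))) p :=
    hF.comp (f := fun q => (x q, id q)) p (hx.prodMk (hasFDerivAt_id p))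
  have hconst : HasFDerivAt (fun q => F (x q, q)) (0 : P →L[𝕜] G) p :=
    (hasFDerivAt_const 0 p).congr_of_eventuallyEq hzero
  have hv : F' (x' v, v) = 0 := by
    simpa using congrArg (· v) (hcomp.unique hconst)
  rw [show (x' v, v) = (x' v, 0) + (0, v) by simp, map_add] at hv
  exact eq_neg_of_add_eq_zero_left hv

end ImplicitDifferentiation

section Coordinates

variable {R ι κ Fₗ : Type*} [CommSemiring R] [Fintype ι] [DecidableEq ι]

theorem Matrix.mulVec_eq_of_apply_single [FunLike Fₗ (ι → R) (κ → R)]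
    [LinearMapClass Fₗ R (ι → R) (κ → R)] {L : Fₗ} {A : Matrix κ ι R}
    (hA : ∀ i j, A i j = L (Pi.single j 1) i) (v : ι → R) : A *ᵥ v = L v := by
  rw [show A = LinearMap.toMatrix' (L : (ι → R) →ₗ[R] κ → R) from Matrix.ext hA,
    LinearMap.toMatrix'_mulVec]
  rfl

theorem Matrix.dotProduct_eq_of_apply_single [FunLike Fₗ (ι → R) R]
    [LinearMapClass Fₗ R (ι → R) R] {l : Fₗ} {g : ι → R}
    (hg : ∀ j, g j = l (Pi.single j 1)) (v : ι → R) : g ⬝ᵥ v = l v := by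
  conv_rhs => rw [← LinearMap.sum_single_apply (v := v)]
  simp only [map_sum, dotProduct, hg]
  refine Finset.sum_congr rfl fun j _ => ?_
  rw [mul_comm, ← smul_eq_mul, ← map_smul, ← Pi.single_smul', smul_eq_mul, mul_one]

end Coordinates

theorem Matrix.eq_neg_inv_det_smul_adjugate_mulVec {R ι : Type*} [CommRing R] [Fintype ι]
    [DecidableEq ι] {A : Matrix ι ι R} (hA : IsUnit A) {v b : ι → R} (h : A *ᵥ v = -b) :
    v = -(Ring.inverse A.det • A.adjugate *ᵥ b) := by
  have hdet : IsUnit A.det := (isUnit_iff_isUnit_det A).mp hA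
  rw [← smul_mulVec, ← inv_def, ← mulVec_neg, ← h, mulVec_mulVec, nonsing_inv_mul A hdet,
    one_mulVec]

/-- Derivative formula for the input-output function `z = φ ∘ X` of a
`C¹` equilibrium branch with invertible Jacobian, and the resulting characterization of
infinitesimal homeostasis points. -/
theorem stmt_1 (n N : ℕ)
    (F : (Fin n → ℝ) × (Fin N → ℝ) → (Fin n → ℝ))
    (hF : ContDiff ℝ 1 F)
    (Ω : Set (Fin N → ℝ)) (hΩ : IsOpen Ω)
    (X : (Fin N → ℝ) → (Fin n → ℝ))
    (hX : ContDiffOn ℝ 1 X Ω)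
    (heq : ∀ I ∈ Ω, F (X I, I) = 0)
    (J : (Fin N → ℝ) → Matrix (Fin n) (Fin n) ℝ)
    (hJ : ∀ I i j, J I i j = fderiv ℝ F (X I, I) (Pi.single j 1, 0) i)
    (hJinv : ∀ I ∈ Ω, IsUnit (J I))
    (FI : Fin N → (Fin N → ℝ) → (Fin n → ℝ))
    (hFI : ∀ M I, FI M I = fderiv ℝ F (X I, I) (0, Pi.single M 1))
    (φ : (Fin n → ℝ) → ℝ) (hφ : ContDiff ℝ 1 φ)
    (gradφ : (Fin n → ℝ) → (Fin n → ℝ))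
    (hgrad : ∀ x j, gradφ x j = fderiv ℝ φ x (Pi.single j 1))
    (z : (Fin N → ℝ) → ℝ) (hz : ∀ I, z I = φ (X I)) :
    (∀ (M : Fin N), ∀ I ∈ Ω,
      fderiv ℝ z I (Pi.single M 1) =
        (-(1 / (J I).det)) *
          dotProduct (gradφ (X I)) ((J I).adjugate.mulVec (FI M I))) ∧
    (∀ I₀ ∈ Ω,
      ((∀ M : Fin N, fderiv ℝ z I₀ (Pi.single M 1) = 0) ↔
        (∀ M : Fin N,
          dotProduct (gradφ (X I₀)) ((J I₀).adjugate.mulVec (FI M I₀)) = 0))) := by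
  have hderiv : ∀ (M : Fin N), ∀ I ∈ Ω, fderiv ℝ z I (Pi.single M 1) =
      (-(1 / (J I).det)) * dotProduct (gradφ (X I)) ((J I).adjugate.mulVec (FI M I)) := by
    intro M I hI
    have hXI : HasFDerivAt X (fderiv ℝ X I) I :=
      ((hX.differentiableOn one_ne_zero).differentiableAt (hΩ.mem_nhds hI)).hasFDerivAt
    have hFXI := ((hF.differentiable one_ne_zero) (X I, I)).hasFDerivAt
    have hφXI := ((hφ.differentiable one_ne_zero) (X I)).hasFDerivAt
    have hbranch : J I *ᵥ fderiv ℝ X I (Pi.single M 1) = -FI M I := by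
      rw [mulVec_eq_of_apply_single (L := fderiv ℝ F (X I, I) ∘L .inl ℝ _ _) (hJ I), hFI]
      exact hFXI.apply_prod_zero_eq_neg_of_eventually_eq_zero hXI
        (eventually_of_mem (hΩ.mem_nhds hI) heq) _
    rw [show z = φ ∘ X from funext hz, (hφXI.comp I hXI).fderiv, ContinuousLinearMap.comp_apply,
      ← dotProduct_eq_of_apply_single (hgrad _),
      eq_neg_inv_det_smul_adjugate_mulVec (hJinv I hI) hbranch, Ring.inverse_eq_inv',
      dotProduct_neg, dotProduct_smul, smul_eq_mul, one_div, neg_mul]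
  refine ⟨hderiv, fun I₀ hI₀ => forall_congr' fun M => ?_⟩
  have hdet : (J I₀).det ≠ 0 := ((isUnit_iff_isUnit_det _).mp (hJinv I₀ hI₀)).ne_zero
  rw [hderiv M I₀ hI₀, mul_eq_zero, or_iff_right (by simpa using hdet)]
end

section
/- Let n ≥ 2 and let z : [a, ∞) → ℝ be n times differentiable. Suppose z(I) → c for some real constant c as I → ∞, and suppose each of the derivatives z', z'', …, z⁽ⁿ⁾ is bounded on [a, ∞). Then z⁽ʲ⁾(I) → 0 as I → ∞ for every j with 1 ≤ j ≤ n − 1. -/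
/-!
Landau's inequality: if `f → c` and `|f''| ≤ C`, then for every step `h > 0` the mean value
theorem gives `|f' x| ≤ |f (x + h) - f x| / h + C h`, whose right-hand side tends to `C h`;
as `h` is arbitrary, `f' → 0`. Applying this to `Z j, Z (j + 1), Z (j + 2)` for
`j = 0, 1, …, n - 2` in turn gives the claim.
-/

open Set Filter Topology

section Landau

variable {a C : ℝ} {f f' f'' : ℝ → ℝ}

theorem abs_deriv_le_abs_sub_div_add_mul
    (hf : ∀ x ∈ Ici a, HasDerivWithinAt f (f' x) (Ici a) x)
    (hf' : ∀ x ∈ Ici a, HasDerivWithinAt f' (f'' x) (Ici a) x)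
    (hC : ∀ x ∈ Ici a, |f'' x| ≤ C) {x h : ℝ} (hx : x ∈ Ici a) (hh : 0 < h) :
    |f' x| ≤ |f (x + h) - f x| / h + C * h := by
  have hsub : Icc x (x + h) ⊆ Ici a := fun y hy => le_trans hx hy.1
  have hcont : ContinuousOn f (Icc x (x + h)) := fun y hy =>
    (hf y (hsub hy)).continuousWithinAt.mono hsub
  have hdiff : ∀ y ∈ Ioo x (x + h), HasDerivAt f (f' y) y := fun y hy =>
    (hf y (hsub (Ioo_subset_Icc_self hy))).hasDerivAt (Ici_mem_nhds (lt_of_le_of_lt hx hy.1))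
  obtain ⟨ξ, hξ, hslope⟩ := exists_hasDerivAt_eq_slope f f' (lt_add_of_pos_right x hh) hcont hdiff
  rw [add_sub_cancel_left] at hslope
  have hξx : |f' ξ - f' x| ≤ C * h := by
    have := (convex_Ici a).norm_image_sub_le_of_norm_hasDerivWithin_le hf' hC hx
      (hsub (Ioo_subset_Icc_self hξ))
    rw [Real.norm_eq_abs, Real.norm_eq_abs, abs_of_pos (sub_pos.2 hξ.1)] at this
    exact this.trans (mul_le_mul_of_nonneg_left (by linarith [hξ.2]) ((abs_nonneg _).trans (hC x hx)))
  have hslope_abs : |f' ξ| = |f (x + h) - f x| / h := by rw [hslope, abs_div, abs_of_pos hh]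
  linarith [abs_sub_abs_le_abs_sub (f' x) (f' ξ), abs_sub_comm (f' x) (f' ξ)]

theorem tendsto_deriv_zero_of_tendsto_of_abs_deriv2_le {c : ℝ}
    (hf : ∀ x ∈ Ici a, HasDerivWithinAt f (f' x) (Ici a) x)
    (hf' : ∀ x ∈ Ici a, HasDerivWithinAt f' (f'' x) (Ici a) x)
    (hC : ∀ x ∈ Ici a, |f'' x| ≤ C) (hlim : Tendsto f atTop (𝓝 c)) :
    Tendsto f' atTop (𝓝 0) := by
  rw [Metric.tendsto_nhds]
  intro ε hε
  obtain ⟨h, hh, hCh⟩ := exists_pos_mul_lt hε C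
  have hbound : Tendsto (fun x => |f (x + h) - f x| / h + C * h) atTop (𝓝 (0 / h + C * h)) := by
    have hshift : Tendsto (fun x => f (x + h)) atTop (𝓝 c) :=
      hlim.comp (tendsto_atTop_add_const_right _ h tendsto_id)
    simpa only [sub_self, abs_zero] using
      (((hshift.sub hlim).abs).div_const h).add_const (C * h)
  rw [zero_div, zero_add] at hbound
  filter_upwards [hbound.eventually_lt_const hCh, eventually_ge_atTop a] with x hlt hxa
  rw [Real.dist_eq, sub_zero]
  exact (abs_deriv_le_abs_sub_div_add_mul hf hf' hC hxa hh).trans_lt hlt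

end Landau

theorem stmt_3_general (n : ℕ) (a c : ℝ) (z : ℝ → ℝ) (Z : ℕ → ℝ → ℝ)
    (hz : Z 0 = z)
    (hderiv : ∀ j < n, ∀ x ∈ Set.Ici a, HasDerivWithinAt (Z j) (Z (j + 1) x) (Set.Ici a) x)
    (hlim : Filter.Tendsto z Filter.atTop (nhds c))
    (hbdd : ∀ j, 1 ≤ j → j ≤ n → ∃ C, ∀ x ∈ Set.Ici a, |Z j x| ≤ C) :
    ∀ j, 1 ≤ j → j ≤ n - 1 → Filter.Tendsto (Z j) Filter.atTop (nhds 0) := by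
  have step : ∀ j, j + 2 ≤ n → ∀ {L}, Tendsto (Z j) atTop (𝓝 L) →
      Tendsto (Z (j + 1)) atTop (𝓝 0) := fun j hj _ hL => by
    obtain ⟨C, hC⟩ := hbdd (j + 2) (by omega) hj
    exact tendsto_deriv_zero_of_tendsto_of_abs_deriv2_le
      (hderiv j (by omega)) (hderiv (j + 1) (by omega)) hC hL
  intro j hj
  induction j, hj using Nat.le_induction with
  | base => exact fun h1n => step 0 (by omega) (hz ▸ hlim)
  | succ k hk ih => exact fun hkn => step k (by omega) (ih (by omega))

/-- Hadamard-type lemma. If `z` is `n` times differentiable on `[a, ∞)`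
(with `Z j` denoting its `j`-th derivative, `Z 0 = z`), `z(I) → c` as `I → ∞`, and each of
the derivatives `z', …, z⁽ⁿ⁾` is bounded on `[a, ∞)`, then `z⁽ʲ⁾(I) → 0` as `I → ∞` for
every `1 ≤ j ≤ n − 1`. -/
theorem stmt_3 (n : ℕ) (hn : 2 ≤ n) (a c : ℝ) (z : ℝ → ℝ) (Z : ℕ → ℝ → ℝ)
    (hz : Z 0 = z)
    (hderiv : ∀ j < n, ∀ x ∈ Set.Ici a, HasDerivWithinAt (Z j) (Z (j + 1) x) (Set.Ici a) x)
    (hlim : Filter.Tendsto z Filter.atTop (nhds c))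
    (hbdd : ∀ j, 1 ≤ j → j ≤ n → ∃ C, ∀ x ∈ Set.Ici a, |Z j x| ≤ C) :
    ∀ j, 1 ≤ j → j ≤ n - 1 → Filter.Tendsto (Z j) Filter.atTop (nhds 0) :=
  stmt_3_general n a c z Z hz hderiv hlim hbdd
end

section
/- Let F : ℝ^{n+2} × ℝ → ℝ^{n+2} be continuously differentiable, with state coordinates indexed 0, 1, …, n+1, where coordinate 0 is the input node ι and coordinate n+1 is the output node o, and suppose the components F_j for j ≠ 0 do not depend on the parameter I (∂F_j/∂I ≡ 0 for j ≠ 0). Let X : Ω → ℝ^{n+2} be an equilibrium branch on an open set Ω ⊆ ℝ with invertible Jacobian J(I), and let H(I) be the (n+1)×(n+1) homeostasis matrix obtained from J(I) by deleting row 0 and column n+1. Then the input-output function x_o(I) = X_{n+1}(I) satisfies x_o'(I) = (−1)ⁿ · (∂F_0/∂I)(X(I), I) · det H(I) / det J(I). In particular, if ∂F₀/∂I ≠ 0 at I₀, then x_o'(I₀) = 0 if and only if det H(I₀) = 0. -/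
/-!
Differentiating `F (X I, I) = 0` gives `J X' = -∂F/∂I`, and since `I` enters only the input
equation the right-hand side is `-(∂F₀/∂I) e₀`. By Cramer's rule the output component of `X'`
is then `-(∂F₀/∂I) · adj(J)_{n+1,0} / det J`, and this cofactor is `(-1)^(n+1) det H` because
deleting row `0` and column `n+1` of `J` leaves exactly `H`.
-/

open Matrix Filter Topology

namespace Matrix

variable {R : Type*} [CommRing R] {n : ℕ}

theorem adjugate_last_zero (A : Matrix (Fin (n + 2)) (Fin (n + 2)) R) :
    A.adjugate (Fin.last (n + 1)) 0 =
      (-1) ^ (n + 1) * (A.submatrix Fin.succ Fin.castSucc).det := by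
  rw [adjugate_fin_succ_eq_det_submatrix, Fin.succAbove_last]
  simp [Fin.succAbove_zero]

theorem det_mul_apply_last_of_mulVec_add_single_eq_zero
    (A : Matrix (Fin (n + 2)) (Fin (n + 2)) R) {v : Fin (n + 2) → R} {c : R}
    (h : A *ᵥ v + Pi.single 0 c = 0) :
    A.det * v (Fin.last (n + 1)) = (-1) ^ n * c * (A.submatrix Fin.succ Fin.castSucc).det := by
  have hv : A.det • v = A.adjugate *ᵥ (-Pi.single 0 c) := by
    rw [← eq_neg_of_add_eq_zero_left h, mulVec_mulVec, adjugate_mul, smul_mulVec, one_mulVec]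
  have hlast := congrFun hv (Fin.last (n + 1))
  simp only [mulVec_neg, mulVec_single, Pi.smul_apply, Pi.neg_apply, smul_eq_mul, col_apply,
    op_smul_eq_mul, adjugate_last_zero] at hlast
  rw [hlast]
  ring

end Matrix

theorem ContinuousLinearMap.apply_inl_eq_mulVec {ι E : Type*} [Fintype ι] [DecidableEq ι]
    [NormedAddCommGroup E] [NormedSpace ℝ E] (L : (ι → ℝ) × E →L[ℝ] (ι → ℝ)) (v : ι → ℝ) :
    L (v, 0) = Matrix.of (fun i j => L (Pi.single j 1, 0) i) *ᵥ v :=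
  (LinearMap.toMatrix'_mulVec (L.comp (ContinuousLinearMap.inl ℝ _ E)).toLinearMap v).symm

theorem fderiv_apply_deriv_prodMk_eq_zero {E G : Type*} [NormedAddCommGroup E] [NormedSpace ℝ E]
    [NormedAddCommGroup G] [NormedSpace ℝ G] {F : E × ℝ → G} {X : ℝ → E} {I : ℝ}
    (hF : DifferentiableAt ℝ F (X I, I)) (hX : DifferentiableAt ℝ X I)
    (h : ∀ᶠ s in 𝓝 I, F (X s, s) = 0) :
    fderiv ℝ F (X I, I) (deriv X I, 1) = 0 := by
  have hgraph : HasDerivAt (fun s => (X s, s)) (deriv X I, 1) I :=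
    hX.hasDerivAt.prodMk (hasDerivAt_id I)
  exact (hF.hasFDerivAt.comp_hasDerivAt_of_eq I hgraph rfl).unique
    ((hasDerivAt_const I 0).congr_of_eventuallyEq h)

theorem fderiv_apply_zero_one_apply_eq_zero {ι E : Type*} [NormedAddCommGroup E] [NormedSpace ℝ E]
    [Fintype ι] {F : E × ℝ → ι → ℝ} {x : E} {I : ℝ} {j : ι}
    (hF : DifferentiableAt ℝ F (x, I)) (h : ∀ t, F (x, t) j = F (x, I) j) :
    fderiv ℝ F (x, I) (0, 1) j = 0 := by
  have hline : HasDerivAt (fun t => (x, t)) ((0 : E), (1 : ℝ)) I :=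
    (hasDerivAt_const I x).prodMk (hasDerivAt_id I)
  have hcurve := hF.hasFDerivAt.comp_hasDerivAt_of_eq I hline rfl
  refine (hasDerivAt_pi.mp hcurve j).unique ?_
  simpa only [Function.comp_def, h] using hasDerivAt_const I (F (x, I) j)

/-- For an input-output network with input node `0`, output node `n+1`,
and the parameter entering only the input-node equation, the derivative of the
input-output function `x_o(I) = X_{n+1}(I)` is
`(-1)ⁿ · f_{ι,I} · det H / det J`, where `H` is the homeostasis matrix obtained from the
Jacobian `J` by deleting the input-node row and the output-node column.  In particular,
if `f_{ι,I} ≠ 0`, infinitesimal homeostasis at `I₀` is equivalent to `det H(I₀) = 0`. -/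
theorem stmt_4 (n : ℕ)
    (F : (Fin (n + 2) → ℝ) × ℝ → (Fin (n + 2) → ℝ))
    (hF : ContDiff ℝ 1 F)
    (hInd : ∀ (x : Fin (n + 2) → ℝ) (I I' : ℝ) (j : Fin (n + 2)),
      j ≠ 0 → F (x, I) j = F (x, I') j)
    (Ω : Set ℝ) (hΩ : IsOpen Ω)
    (X : ℝ → (Fin (n + 2) → ℝ))
    (hX : ContDiffOn ℝ 1 X Ω)
    (heq : ∀ I ∈ Ω, F (X I, I) = 0)
    (J : ℝ → Matrix (Fin (n + 2)) (Fin (n + 2)) ℝ)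
    (hJ : ∀ I i j, J I i j = fderiv ℝ F (X I, I) (Pi.single j 1, 0) i)
    (hJinv : ∀ I ∈ Ω, IsUnit (J I))
    (H : ℝ → Matrix (Fin (n + 1)) (Fin (n + 1)) ℝ)
    (hH : ∀ I, H I = (J I).submatrix Fin.succ Fin.castSucc) :
    (∀ I ∈ Ω,
      deriv (fun s => X s (Fin.last (n + 1))) I =
        (-1) ^ n * (fderiv ℝ F (X I, I) (0, 1) 0) * (H I).det / (J I).det) ∧
    (∀ I₀ ∈ Ω, fderiv ℝ F (X I₀, I₀) (0, 1) 0 ≠ 0 →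
      (deriv (fun s => X s (Fin.last (n + 1))) I₀ = 0 ↔ (H I₀).det = 0)) := by
  have hdet : ∀ I ∈ Ω, (J I).det ≠ 0 := fun I hI =>
    ((J I).isUnit_iff_isUnit_det.mp (hJinv I hI)).ne_zero
  have hderiv : ∀ I ∈ Ω, deriv (fun s => X s (Fin.last (n + 1))) I =
      (-1) ^ n * (fderiv ℝ F (X I, I) (0, 1) 0) * (H I).det / (J I).det := by
    intro I hI
    set DF := fderiv ℝ F (X I, I)
    have hFd : DifferentiableAt ℝ F (X I, I) := hF.differentiable one_ne_zero _
    have hXd : DifferentiableAt ℝ X I :=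
      (hX.differentiableOn one_ne_zero).differentiableAt (hΩ.mem_nhds hI)
    have hJ_eq : J I = Matrix.of fun i j => DF (Pi.single j 1, 0) i := Matrix.ext (hJ I)
    have hparam : DF (0, 1) = Pi.single 0 (DF (0, 1) 0) := by
      ext j
      rcases eq_or_ne j 0 with rfl | hj
      · simp
      · rw [Pi.single_eq_of_ne hj]
        exact fderiv_apply_zero_one_apply_eq_zero hFd fun t => hInd _ t I j hj
    have hlinear : J I *ᵥ deriv X I + Pi.single 0 (DF (0, 1) 0) = 0 := by
      rw [hJ_eq, ← DF.apply_inl_eq_mulVec, ← hparam, ← map_add, Prod.mk_add_mk, add_zero,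
        zero_add]
      exact fderiv_apply_deriv_prodMk_eq_zero hFd hXd (eventually_of_mem (hΩ.mem_nhds hI) heq)
    rw [(hasDerivAt_pi.mp hXd.hasDerivAt _).deriv, eq_div_iff (hdet I hI), mul_comm, hH,
      det_mul_apply_last_of_mulVec_add_single_eq_zero _ hlinear]
  refine ⟨hderiv, fun I₀ hI₀ hf => ?_⟩
  simp [hderiv I₀ hI₀, hf, hdet I₀ hI₀]
end

section
/- Let g₁, g₂, g₃, g₄, g₅, f : ℝ → ℝ be continuously differentiable and consider the feedforward excitation system ẋ = I − g₁(x) − g₄(x), ẏ = g₁(x) − g₂(y) − g₅(y), ż = g₂(y) − f(x)·g₃(z). Let (x(I), y(I), z(I)) be a continuously differentiable family of equilibria on a neighborhood of I₀ whose 3×3 Jacobian is invertible at I₀, and write (x₀, y₀, z₀) = (x(I₀), y(I₀), z(I₀)). Then z'(I₀) = 0 if and only if f'(x₀) · g₃(z₀) · (g₂'(y₀) + g₅'(y₀)) = g₁'(x₀) · g₂'(y₀). -/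
/-!
Differentiating the three equilibrium identities at `I₀` gives the linearized system
`(g₁' + g₄') x' = 1`, `(g₂' + g₅') y' = g₁' x'`, `f g₃' z' = g₂' y' - f' g₃ x'`.
Eliminating `y'` yields `(g₂' + g₅') f g₃' z' = (g₁' g₂' - f' g₃ (g₂' + g₅')) x'`.
The Jacobian is lower triangular, so its invertibility makes the coefficient of `z'` nonzero,
while `x' ≠ 0` by the first equation; hence `z' = 0` exactly when the bracket vanishes.
-/

open Filter Topology

theorem HasDerivAt.eq_zero_of_eventually_eq_zero {𝕜 F : Type*} [NontriviallyNormedField 𝕜]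
    [NormedAddCommGroup F] [NormedSpace 𝕜 F] {φ : 𝕜 → F} {φ' : F} {t : 𝕜}
    (hφ : HasDerivAt φ φ' t) (h : ∀ᶠ s in 𝓝 t, φ s = 0) : φ' = 0 :=
  hφ.unique ((hasDerivAt_const t (0 : F)).congr_of_eventuallyEq h)

theorem ContDiff.hasDerivAt_comp {𝕜 : Type*} [NontriviallyNormedField 𝕜] {g x : 𝕜 → 𝕜}
    {x' t : 𝕜} (hg : ContDiff 𝕜 1 g) (hx : HasDerivAt x x' t) :
    HasDerivAt (fun s => g (x s)) (deriv g (x t) * x') t :=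
  ((hg.differentiable one_ne_zero (x t)).hasDerivAt).comp t hx

theorem ContDiffOn.hasDerivAt {𝕜 F : Type*} [NontriviallyNormedField 𝕜] [NormedAddCommGroup F]
    [NormedSpace 𝕜 F] {x : 𝕜 → F} {Ω : Set 𝕜} {t : 𝕜} (hx : ContDiffOn 𝕜 1 x Ω)
    (hΩ : Ω ∈ 𝓝 t) : HasDerivAt x (deriv x t) t :=
  ((hx.contDiffAt hΩ).differentiableAt one_ne_zero).hasDerivAt

theorem Matrix.det_fin_three_of_lowerTriangular {R : Type*} [CommRing R] (u v w s t k : R) :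
    !![u, 0, 0; v, w, 0; s, t, k].det = u * w * k := by
  simp [Matrix.det_fin_three]

/-- The hypotheses are the linearized equilibrium equations in the shape differentiation produces. -/
theorem feedforward_linearized_output_eq_zero_iff {a b c d e p q r x' y' z' : ℝ}
    (h₁ : 1 - a * x' - d * x' = 0) (h₂ : a * x' - b * y' - e * y' = 0)
    (h₃ : b * y' - (p * x' * q + r * (c * z')) = 0) (hbe : -b - e ≠ 0) (hrc : -r * c ≠ 0) :
    z' = 0 ↔ p * q * (b + e) = a * b := by
  have hx' : x' ≠ 0 := by
    rintro rfl
    simp at h₁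
  have elim : ((-b - e) * (-r * c)) * z' = (a * b - p * q * (b + e)) * x' := by
    linear_combination (-(b + e)) * h₃ - b * h₂
  rw [← mul_right_inj' (mul_ne_zero hbe hrc), mul_zero, elim, mul_eq_zero, or_iff_left hx',
    sub_eq_zero, eq_comm]

/-- (Feedforward excitation.)  For the system
`ẋ = I − g₁(x) − g₄(x)`, `ẏ = g₁(x) − g₂(y) − g₅(y)`, `ż = g₂(y) − f(x)g₃(z)` with a `C¹`
family of equilibria near `I₀` whose Jacobian is invertible at `I₀`, infinitesimal
homeostasis of the output (`z'(I₀) = 0`) holds iff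
`f'(x₀) g₃(z₀) (g₂'(y₀) + g₅'(y₀)) = g₁'(x₀) g₂'(y₀)`. -/
theorem stmt_12 (g₁ g₂ g₃ g₄ g₅ f : ℝ → ℝ)
    (hg₁ : ContDiff ℝ 1 g₁) (hg₂ : ContDiff ℝ 1 g₂) (hg₃ : ContDiff ℝ 1 g₃)
    (hg₄ : ContDiff ℝ 1 g₄) (hg₅ : ContDiff ℝ 1 g₅) (hf : ContDiff ℝ 1 f)
    (Ω : Set ℝ) (hΩ : IsOpen Ω) (I₀ : ℝ) (hI₀ : I₀ ∈ Ω)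
    (x y z : ℝ → ℝ)
    (hx : ContDiffOn ℝ 1 x Ω) (hy : ContDiffOn ℝ 1 y Ω) (hz : ContDiffOn ℝ 1 z Ω)
    (heq1 : ∀ I ∈ Ω, I - g₁ (x I) - g₄ (x I) = 0)
    (heq2 : ∀ I ∈ Ω, g₁ (x I) - g₂ (y I) - g₅ (y I) = 0)
    (heq3 : ∀ I ∈ Ω, g₂ (y I) - f (x I) * g₃ (z I) = 0)
    (hJ : (!![-(deriv g₁ (x I₀)) - deriv g₄ (x I₀), 0, 0;
              deriv g₁ (x I₀), -(deriv g₂ (y I₀)) - deriv g₅ (y I₀), 0;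
              -(deriv f (x I₀)) * g₃ (z I₀), deriv g₂ (y I₀),
                -(f (x I₀)) * deriv g₃ (z I₀)]).det ≠ 0) :
    deriv z I₀ = 0 ↔
      deriv f (x I₀) * g₃ (z I₀) * (deriv g₂ (y I₀) + deriv g₅ (y I₀))
        = deriv g₁ (x I₀) * deriv g₂ (y I₀) := by
  have hΩI₀ : Ω ∈ 𝓝 I₀ := hΩ.mem_nhds hI₀
  have hx' := hx.hasDerivAt hΩI₀
  have hy' := hy.hasDerivAt hΩI₀
  have hz' := hz.hasDerivAt hΩI₀
  have lin₁ := ((hasDerivAt_id' I₀).sub (hg₁.hasDerivAt_comp hx')).sub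
    (hg₄.hasDerivAt_comp hx') |>.eq_zero_of_eventually_eq_zero (eventually_of_mem hΩI₀ heq1)
  have lin₂ := ((hg₁.hasDerivAt_comp hx').sub (hg₂.hasDerivAt_comp hy')).sub
    (hg₅.hasDerivAt_comp hy') |>.eq_zero_of_eventually_eq_zero (eventually_of_mem hΩI₀ heq2)
  have lin₃ := (hg₂.hasDerivAt_comp hy').sub
    ((hf.hasDerivAt_comp hx').mul (hg₃.hasDerivAt_comp hz'))
    |>.eq_zero_of_eventually_eq_zero (eventually_of_mem hΩI₀ heq3)
  rw [Matrix.det_fin_three_of_lowerTriangular] at hJ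
  exact feedforward_linearized_output_eq_zero_iff lin₁ lin₂ lin₃
    (right_ne_zero_of_mul (left_ne_zero_of_mul hJ)) (right_ne_zero_of_mul hJ)
end

section
/- Let φ : ℝ × ℝ → ℝ be differentiable and let γ_R, γ_B, k₁, k₂, k₃ be real constants. Define f₁(x₁, σ, I) = γ_R(1 − φ(x₁, I)) − γ_B σ² φ(x₁, I) and f₂(x₁, x₂, σ, y, I) = φ(x₁, I)·k₁·(1 − x₂) − k₂(1 − y)x₂ − k₃(1 − σ)x₂. Then at every point, (∂f₁/∂I)·(∂f₂/∂x₁) − (∂f₂/∂I)·(∂f₁/∂x₁) = 0 identically. -/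
/-! Both right-hand sides depend on the input pair `(x₁, I)` only through `φ (x₁, I)`, and
affinely: `f₁ = γR - (γR + γB σ²) φ` and `f₂ = k₁ (1 - x₂) φ - (k₂ (1 - y) + k₃ (1 - σ)) x₂`.
Hence every partial derivative of `fᵢ` in `x₁` or `I` is the slope of `fᵢ` in `φ` times the same
partial derivative of `φ`, and the 2 × 2 determinant vanishes. -/

theorem deriv_const_add_const_mul (c d : ℝ) (g : ℝ → ℝ) (x : ℝ) :
    deriv (fun s => c + d * g s) x = d * deriv g x := by
  rw [deriv_const_add, deriv_const_mul_field']

theorem partial_deriv_det_eq_zero_of_affine (g : ℝ × ℝ → ℝ) (c₁ d₁ c₂ d₂ x y : ℝ) :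
    deriv (fun s => c₁ + d₁ * g (x, s)) y * deriv (fun t => c₂ + d₂ * g (t, y)) x
      - deriv (fun s => c₂ + d₂ * g (x, s)) y * deriv (fun t => c₁ + d₁ * g (t, y)) x = 0 := by
  simp only [deriv_const_add_const_mul]
  ring

theorem stmt_13_general (φ : ℝ × ℝ → ℝ)
    (γR γB k₁ k₂ k₃ : ℝ)
    (f₁ : ℝ → ℝ → ℝ → ℝ)
    (hf₁ : ∀ x₁ σ I, f₁ x₁ σ I = γR * (1 - φ (x₁, I)) - γB * σ ^ 2 * φ (x₁, I))
    (f₂ : ℝ → ℝ → ℝ → ℝ → ℝ → ℝ)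
    (hf₂ : ∀ x₁ x₂ σ y I, f₂ x₁ x₂ σ y I =
      φ (x₁, I) * k₁ * (1 - x₂) - k₂ * (1 - y) * x₂ - k₃ * (1 - σ) * x₂) :
    ∀ x₁ x₂ σ y I : ℝ,
      deriv (fun s => f₁ x₁ σ s) I * deriv (fun t => f₂ t x₂ σ y I) x₁
        - deriv (fun s => f₂ x₁ x₂ σ y s) I * deriv (fun t => f₁ t σ I) x₁ = 0 := by
  intro x₁ x₂ σ y I
  have hf₁' : ∀ t s, f₁ t σ s = γR + -(γR + γB * σ ^ 2) * φ (t, s) := by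
    intro t s
    rw [hf₁]
    ring
  have hf₂' : ∀ t s, f₂ t x₂ σ y s =
      -((k₂ * (1 - y) + k₃ * (1 - σ)) * x₂) + k₁ * (1 - x₂) * φ (t, s) := by
    intro t s
    rw [hf₂]
    ring
  simp only [hf₁', hf₂']
  exact partial_deriv_det_eq_zero_of_affine φ _ _ _ _ x₁ I

/-- (Input counterweight identity of the E. coli chemotaxis model.)
For the two input-node right-hand sides `f₁`, `f₂` of the Edgington–Tindall model, built
from an arbitrary differentiable function `φ`, one has identically
`(∂f₁/∂I)(∂f₂/∂x₁) − (∂f₂/∂I)(∂f₁/∂x₁) = 0`. -/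
theorem stmt_13 (φ : ℝ × ℝ → ℝ) (hφ : Differentiable ℝ φ)
    (γR γB k₁ k₂ k₃ : ℝ)
    (f₁ : ℝ → ℝ → ℝ → ℝ)
    (hf₁ : ∀ x₁ σ I, f₁ x₁ σ I = γR * (1 - φ (x₁, I)) - γB * σ ^ 2 * φ (x₁, I))
    (f₂ : ℝ → ℝ → ℝ → ℝ → ℝ → ℝ)
    (hf₂ : ∀ x₁ x₂ σ y I, f₂ x₁ x₂ σ y I =
      φ (x₁, I) * k₁ * (1 - x₂) - k₂ * (1 - y) * x₂ - k₃ * (1 - σ) * x₂) :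
    ∀ x₁ x₂ σ y I : ℝ,
      deriv (fun s => f₁ x₁ σ s) I * deriv (fun t => f₂ t x₂ σ y I) x₁
        - deriv (fun s => f₂ x₁ x₂ σ y s) I * deriv (fun t => f₁ t σ I) x₁ = 0 :=
  stmt_13_general φ γR γB k₁ k₂ k₃ f₁ hf₁ f₂ hf₂
end

section
/- Let φ : ℝ × ℝ → ℝ be continuously differentiable and let γ_R, γ_B, k₁, k₂, k₃, k₄, k₅, α₁, α₂ be real constants. Define F : ℝ⁴ × ℝ → ℝ⁴ on variables (x₁, x₂, σ, y) by F₁ = γ_R(1 − φ(x₁, I)) − γ_B σ² φ(x₁, I); F₂ = φ(x₁, I)k₁(1 − x₂) − k₂(1 − y)x₂ − k₃(1 − σ)x₂; F₃ = α₂k₃(1 − σ)x₂ − k₅σ; F₄ = α₁k₂(1 − y)x₂ − k₄y. Let X : Ω → ℝ⁴ be a continuously differentiable equilibrium branch on an open interval Ω ⊆ ℝ (F(X(I), I) = 0 for all I) whose 4×4 Jacobian J(I) is invertible for all I ∈ Ω. Then the output component y(I) = X₄(I) satisfies y'(I) = 0 for all I ∈ Ω; that is, the model exhibits perfect homeostasis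 of the output. -/
/-!
Both the input `I` and the node `x₁` (the coordinate `v 0`) enter the vector field only through
the single term `φ(x₁, I)`: `F(v, I) = A v + φ(v 0, I) • C v` with `A`, `C` independent of
`v 0`. Hence the `x₁`-column of the Jacobian `J` and `∂F/∂I` are multiples `p • C` and `q • C`
of the same vector. Differentiating `F(X I, I) = 0` gives `J X' = -q • C`; invertibility of `J`
forces `p ≠ 0` and then `X' = -(q / p) • e₀`, so every node other than `x₁`, in particular the
output `y`, has zero derivative.
-/

open Matrix Filter Topology

theorem fderiv_apply_eq_zero_of_equilibrium {E G : Type*} [NormedAddCommGroup E] [NormedSpace ℝ E]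
    [NormedAddCommGroup G] [NormedSpace ℝ G] {F : E × ℝ → G} {X : ℝ → E} {I : ℝ}
    (hF : DifferentiableAt ℝ F (X I, I)) (hX : DifferentiableAt ℝ X I)
    (heq : ∀ᶠ s in 𝓝 I, F (X s, s) = 0) : fderiv ℝ F (X I, I) (deriv X I, 1) = 0 :=
  (hF.hasFDerivAt.comp_hasDerivAt (f := fun s => (X s, s)) I
    (hX.hasDerivAt.prodMk (hasDerivAt_id I))).unique
    ((hasDerivAt_const I 0).congr_of_eventuallyEq heq)

theorem ContinuousLinearMap.of_single_zero_mulVec {ι : Type*} [Fintype ι] [DecidableEq ι]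
    (L : (ι → ℝ) × ℝ →L[ℝ] (ι → ℝ)) (u : ι → ℝ) :
    Matrix.of (fun i j => L (Pi.single j 1, 0) i) *ᵥ u = L (u, 0) :=
  LinearMap.toMatrix'_mulVec (L.comp (ContinuousLinearMap.inl ℝ (ι → ℝ) ℝ)).toLinearMap u

theorem Matrix.apply_eq_zero_of_mulVec_eq_smul_col {K ι : Type*} [Field K] [Fintype ι]
    [DecidableEq ι] {J : Matrix ι ι K} (hJ : J.det ≠ 0) {k : ι} {p q : K} {c u : ι → K}
    (hcol : ∀ i, J i k = p * c i) (hu : J *ᵥ u = q • c) {j : ι} (hj : j ≠ k) : u j = 0 := by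
  have hp : p ≠ 0 := by
    rintro rfl
    exact hJ (det_eq_zero_of_column_eq_zero k (by simpa using hcol))
  have hJk : J *ᵥ Pi.single k 1 = p • c := by
    ext i; simp [hcol]
  have hinj : Function.Injective J.mulVec :=
    mulVec_injective_iff_isUnit.2 ((isUnit_iff_isUnit_det J).2 hJ.isUnit)
  have key : p • u = q • Pi.single k 1 := hinj <| by
    rw [mulVec_smul, mulVec_smul, hu, hJk, smul_comm]
  simpa [hj, hp] using congrFun key j

section
variable {ι : Type*} [Fintype ι] [DecidableEq ι] {φ : ℝ × ℝ → ℝ} {k : ι}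

theorem fderiv_apply_single_of_eq_add_smul {G : Type*} [NormedAddCommGroup G] [NormedSpace ℝ G]
    {F : (ι → ℝ) × ℝ → G} {A C : (ι → ℝ) → G} (hF : ∀ z, F z = A z.1 + φ (z.1 k, z.2) • C z.1)
    (hA : ∀ v t, A (v + Pi.single k t) = A v) (hC : ∀ v t, C (v + Pi.single k t) = C v)
    {x : ι → ℝ} {I : ℝ} (hFd : DifferentiableAt ℝ F (x, I))
    (hφd : DifferentiableAt ℝ φ (x k, I)) (a b : ℝ) :
    fderiv ℝ F (x, I) (Pi.single k a, b) = fderiv ℝ φ (x k, I) (a, b) • C x := by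
  have hline : ∀ t : ℝ, F ((x, I) + t • (Pi.single k a, b)) =
      A x + φ ((x k, I) + t • (a, b)) • C x := by
    intro t
    simp [hF, ← Pi.single_smul, hA, hC]
  refine (hFd.hasFDerivAt.hasLineDerivAt _).unique ?_
  exact (((hφd.hasFDerivAt.hasLineDerivAt (a, b)).smul_const (C x)).const_add
    (A x)).congr_of_eventuallyEq (Eventually.of_forall hline)

theorem deriv_apply_eq_zero_of_eq_add_smul {F : (ι → ℝ) × ℝ → ι → ℝ} {A C : (ι → ℝ) → ι → ℝ}
    (hF : ∀ z, F z = A z.1 + φ (z.1 k, z.2) • C z.1)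
    (hA : ∀ v t, A (v + Pi.single k t) = A v) (hC : ∀ v t, C (v + Pi.single k t) = C v)
    {X : ℝ → ι → ℝ} {I : ℝ} (hX : DifferentiableAt ℝ X I)
    (hAd : DifferentiableAt ℝ A (X I)) (hCd : DifferentiableAt ℝ C (X I))
    (hφd : DifferentiableAt ℝ φ (X I k, I)) (heq : ∀ᶠ s in 𝓝 I, F (X s, s) = 0)
    (hJ : (Matrix.of fun i j => fderiv ℝ F (X I, I) (Pi.single j 1, 0) i).det ≠ 0)
    {j : ι} (hj : j ≠ k) : deriv (fun s => X s j) I = 0 := by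
  have hFd : DifferentiableAt ℝ F (X I, I) := by
    rw [show F = _ from funext hF]
    fun_prop
  have hbranch := fderiv_apply_eq_zero_of_equilibrium hFd hX heq
  have hcol := fderiv_apply_single_of_eq_add_smul hF hA hC hFd hφd 1 0
  have hinput := fderiv_apply_single_of_eq_add_smul hF hA hC hFd hφd 0 1
  rw [Pi.single_zero] at hinput
  have hJu : (Matrix.of fun i j => fderiv ℝ F (X I, I) (Pi.single j 1, 0) i) *ᵥ deriv X I =
      (-fderiv ℝ φ (X I k, I) (0, 1)) • C (X I) := by
    rw [ContinuousLinearMap.of_single_zero_mulVec, neg_smul, ← hinput, eq_neg_iff_add_eq_zero,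
      ← map_add, Prod.mk_add_mk, add_zero, zero_add, hbranch]
  exact (hasDerivAt_pi.1 hX.hasDerivAt j).deriv.trans
    (apply_eq_zero_of_mulVec_eq_smul_col hJ (fun i => congrFun hcol i) hJu hj)
end

namespace EdgingtonTindall

def offset (γR k₂ k₃ k₄ k₅ α₁ α₂ : ℝ) (v : Fin 4 → ℝ) : Fin 4 → ℝ :=
  ![γR, -(k₂ * (1 - v 3) * v 1) - k₃ * (1 - v 2) * v 1,
    α₂ * k₃ * (1 - v 2) * v 1 - k₅ * v 2, α₁ * k₂ * (1 - v 3) * v 1 - k₄ * v 3]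

def inputCoeff (γR γB k₁ : ℝ) (v : Fin 4 → ℝ) : Fin 4 → ℝ :=
  ![-(γR + γB * v 2 ^ 2), k₁ * (1 - v 1), 0, 0]

theorem offset_add_single_zero (γR k₂ k₃ k₄ k₅ α₁ α₂ : ℝ) (v : Fin 4 → ℝ) (t : ℝ) :
    offset γR k₂ k₃ k₄ k₅ α₁ α₂ (v + Pi.single 0 t) = offset γR k₂ k₃ k₄ k₅ α₁ α₂ v := by
  simp [offset]

theorem inputCoeff_add_single_zero (γR γB k₁ : ℝ) (v : Fin 4 → ℝ) (t : ℝ) :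
    inputCoeff γR γB k₁ (v + Pi.single 0 t) = inputCoeff γR γB k₁ v := by
  simp [inputCoeff]

theorem differentiable_offset (γR k₂ k₃ k₄ k₅ α₁ α₂ : ℝ) :
    Differentiable ℝ (offset γR k₂ k₃ k₄ k₅ α₁ α₂) := by
  refine differentiable_pi.2 fun i => ?_
  fin_cases i <;> simp only [offset, Fin.zero_eta, Fin.mk_one, Fin.reduceFinMk, cons_val] <;>
    fun_prop

theorem differentiable_inputCoeff (γR γB k₁ : ℝ) : Differentiable ℝ (inputCoeff γR γB k₁) := by
  refine differentiable_pi.2 fun i => ?_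
  fin_cases i <;> simp only [inputCoeff, Fin.zero_eta, Fin.mk_one, Fin.reduceFinMk, cons_val] <;>
    fun_prop

end EdgingtonTindall

theorem stmt_14_general (φ : ℝ × ℝ → ℝ) (hφ : ContDiff ℝ 1 φ)
    (γR γB k₁ k₂ k₃ k₄ k₅ α₁ α₂ : ℝ)
    (F : (Fin 4 → ℝ) × ℝ → (Fin 4 → ℝ))
    (hF : ∀ (v : Fin 4 → ℝ) (I : ℝ),
      F (v, I) = ![γR * (1 - φ (v 0, I)) - γB * (v 2) ^ 2 * φ (v 0, I),
                   φ (v 0, I) * k₁ * (1 - v 1) - k₂ * (1 - v 3) * v 1 - k₃ * (1 - v 2) * v 1,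
                   α₂ * k₃ * (1 - v 2) * v 1 - k₅ * v 2,
                   α₁ * k₂ * (1 - v 3) * v 1 - k₄ * v 3])
    (Ω : Set ℝ) (hΩ : IsOpen Ω)
    (X : ℝ → Fin 4 → ℝ) (hX : ContDiffOn ℝ 1 X Ω)
    (heq : ∀ I ∈ Ω, F (X I, I) = 0)
    (hJ : ∀ I ∈ Ω,
      (Matrix.of (fun i j : Fin 4 =>
        fderiv ℝ F (X I, I) (Pi.single j 1, 0) i)).det ≠ 0) :
    ∀ I ∈ Ω, deriv (fun s => X s 3) I = 0 := by
  intro I hI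
  have hΩI : Ω ∈ 𝓝 I := hΩ.mem_nhds hI
  have hsplit : ∀ z, F z = EdgingtonTindall.offset γR k₂ k₃ k₄ k₅ α₁ α₂ z.1 +
      φ (z.1 0, z.2) • EdgingtonTindall.inputCoeff γR γB k₁ z.1 := by
    rintro ⟨v, s⟩
    ext i
    fin_cases i <;>
      simp only [hF, EdgingtonTindall.offset, EdgingtonTindall.inputCoeff, Pi.add_apply, smul_cons,
        smul_eq_mul, Fin.zero_eta, Fin.mk_one, Fin.reduceFinMk, cons_val] <;>
      ring
  exact deriv_apply_eq_zero_of_eq_add_smul hsplit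
    (EdgingtonTindall.offset_add_single_zero _ _ _ _ _ _ _)
    (EdgingtonTindall.inputCoeff_add_single_zero _ _ _)
    ((hX.contDiffAt hΩI).differentiableAt one_ne_zero)
    (EdgingtonTindall.differentiable_offset _ _ _ _ _ _ _ _)
    (EdgingtonTindall.differentiable_inputCoeff _ _ _ _) (hφ.differentiable one_ne_zero _)
    (eventually_of_mem hΩI heq) (hJ I hI) (by decide : (3 : Fin 4) ≠ 0)

/-- The Edgington–Tindall model of E. coli chemotaxis exhibits perfect
homeostasis of the output: along any `C¹` equilibrium branch with invertible Jacobian on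
an open interval `Ω`, the output component `y(I) = X₄(I)` satisfies `y'(I) = 0`
for all `I ∈ Ω`. -/
theorem stmt_14 (φ : ℝ × ℝ → ℝ) (hφ : ContDiff ℝ 1 φ)
    (γR γB k₁ k₂ k₃ k₄ k₅ α₁ α₂ : ℝ)
    (F : (Fin 4 → ℝ) × ℝ → (Fin 4 → ℝ))
    (hF : ∀ (v : Fin 4 → ℝ) (I : ℝ),
      F (v, I) = ![γR * (1 - φ (v 0, I)) - γB * (v 2) ^ 2 * φ (v 0, I),
                   φ (v 0, I) * k₁ * (1 - v 1) - k₂ * (1 - v 3) * v 1 - k₃ * (1 - v 2) * v 1,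
                   α₂ * k₃ * (1 - v 2) * v 1 - k₅ * v 2,
                   α₁ * k₂ * (1 - v 3) * v 1 - k₄ * v 3])
    (Ω : Set ℝ) (hΩ : IsOpen Ω) (hΩ' : Ω.OrdConnected)
    (X : ℝ → Fin 4 → ℝ) (hX : ContDiffOn ℝ 1 X Ω)
    (heq : ∀ I ∈ Ω, F (X I, I) = 0)
    (hJ : ∀ I ∈ Ω,
      (Matrix.of (fun i j : Fin 4 =>
        fderiv ℝ F (X I, I) (Pi.single j 1, 0) i)).det ≠ 0) :
    ∀ I ∈ Ω, deriv (fun s => X s 3) I = 0 :=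
  stmt_14_general φ hφ γR γB k₁ k₂ k₃ k₄ k₅ α₁ α₂ F hF Ω hΩ X hX heq hJ
end

section
/- Let V be a finite type, let E : V → V → Prop be a directed graph, and let ι, o ∈ V. Define an ιo-simple path to be a finite list of pairwise distinct vertices whose first entry is ι, whose last entry is o, and whose consecutive entries are joined by E-edges; call a vertex super-simple if it occurs on every ιo-simple path. Then the order of appearance of super-simple vertices is independent of the path: if ρ₁ and ρ₂ are super-simple vertices and p and q are any two ιo-simple paths, then ρ₁ occurs strictly before ρ₂ in p if and only if ρ₁ occurs strictly before ρ₂ in q. -/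
/-!
Write "`a` before `b` on `l`" as `[a, b] <+ l`. Suppose `ρ₁` comes before `ρ₂` on the
simple path `p` but after it on the simple path `q`. Following `p` from `ι` up to `ρ₁` and
then `q` from `ρ₁` to `o` gives a walk from `ι` to `o` that misses `ρ₂`, and erasing its
loops gives an `ιo`-simple path missing `ρ₂`, so `ρ₂` is not super-simple.
-/

namespace List

variable {α : Type*}

theorem pair_sublist_iff_exists_get {l : List α} {a b : α} :
    [a, b] <+ l ↔ ∃ i j : Fin l.length, (i : ℕ) < j ∧ l.get i = a ∧ l.get j = b := by
  have h := (pairwise_iff_forall_sublist (l := l) (R := fun x y => ¬(x = a ∧ y = b))).symm.trans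
    pairwise_iff_get
  constructor
  · intro hab
    by_contra hne
    exact h.2 (fun i j hij ⟨hi, hj⟩ => hne ⟨i, j, hij, hi, hj⟩) hab ⟨rfl, rfl⟩
  · rintro ⟨i, j, hij, hi, hj⟩
    by_contra hab
    exact h.1 (fun hs ⟨hx, hy⟩ => hab (hx ▸ hy ▸ hs)) i j hij ⟨hi, hj⟩

theorem pair_sublist_iff_exists_eq_append {l : List α} {a b : α} :
    [a, b] <+ l ↔ ∃ s t, l = s ++ a :: t ∧ b ∈ t := by
  constructor
  · intro h
    obtain ⟨r₁, r₂, rfl, ha, hb⟩ := cons_sublist_iff.1 h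
    obtain ⟨s, u, rfl⟩ := append_of_mem ha
    exact ⟨s, u ++ r₂, by simp, by simp [singleton_sublist.1 hb]⟩
  · rintro ⟨s, t, rfl, hb⟩
    exact sublist_append_of_sublist_right ((singleton_sublist.2 hb).cons_cons a)

theorem pair_sublist_or_pair_sublist {l : List α} {a b : α} (hab : a ≠ b) (ha : a ∈ l)
    (hb : b ∈ l) : [a, b] <+ l ∨ [b, a] <+ l := by
  obtain ⟨s, t, rfl⟩ := append_of_mem ha
  rcases mem_append.1 hb with hs | ht
  · exact .inr ((singleton_sublist.2 hs).append (singleton_sublist.2 mem_cons_self))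
  · exact .inl <| pair_sublist_iff_exists_eq_append.2
      ⟨s, t, rfl, (mem_cons.1 ht).resolve_left hab.symm⟩

end List

section Walks

open List

variable {V : Type*} (E : V → V → Prop)

def IsWalkFromTo (x y : V) (p : List V) : Prop :=
  p.head? = some x ∧ p.getLast? = some y ∧ p.IsChain E

variable {E}

theorem IsWalkFromTo.splice {x y x' y' a : V} {p₁ p₂ q₁ q₂ : List V}
    (hp : IsWalkFromTo E x y (p₁ ++ a :: p₂)) (hq : IsWalkFromTo E x' y' (q₁ ++ a :: q₂)) :
    IsWalkFromTo E x y' (p₁ ++ a :: q₂) := by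
  obtain ⟨hpx, -, hpc⟩ := hp
  obtain ⟨-, hqy, hqc⟩ := hq
  refine ⟨by simpa [head?_append] using hpx, by simpa using hqy, ?_⟩
  exact isChain_split.2 ⟨(isChain_split.1 hpc).1, (isChain_split.1 hqc).2⟩

theorem IsWalkFromTo.exists_nodup_subset {x y : V} {l : List V} (h : IsWalkFromTo E x y l) :
    ∃ m, m.Nodup ∧ IsWalkFromTo E x y m ∧ m ⊆ l := by
  by_cases hl : l.Nodup
  · exact ⟨l, hl, h, Subset.refl l⟩
  obtain ⟨a, haa⟩ : ∃ a, [a, a] <+ l := by simpa [nodup_iff_sublist] using hl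
  obtain ⟨s, t, rfl, hat⟩ := pair_sublist_iff_exists_eq_append.1 haa
  obtain ⟨u, w, rfl⟩ := append_of_mem hat
  -- splicing `l` with itself at the two occurrences of `a` cuts out the loop `a :: u`
  have hshort : IsWalkFromTo E x y (s ++ a :: w) :=
    h.splice (show IsWalkFromTo E x y ((s ++ a :: u) ++ a :: w) by simpa using h)
  have : (s ++ a :: w).length < (s ++ a :: (u ++ a :: w)).length := by simp
  obtain ⟨m, hm, hmw, hml⟩ := hshort.exists_nodup_subset
  exact ⟨m, hm, hmw,
    Subset.trans hml ((sublist_append_right (a :: u) (a :: w)).append_left s).subset⟩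
termination_by l.length

theorem not_pair_sublist_of_forall_mem {x y z a b : V} {p q : List V}
    (hb : ∀ r, r.Nodup → IsWalkFromTo E x y r → b ∈ r)
    (hp : p.Nodup) (hpw : IsWalkFromTo E x y p) (hq : q.Nodup) (hqw : IsWalkFromTo E z y q)
    (hab : [a, b] <+ p) : ¬[b, a] <+ q := by
  intro hba
  obtain ⟨p₁, p₂, rfl, hbp⟩ := pair_sublist_iff_exists_eq_append.1 hab
  obtain ⟨q₁, q₂, rfl, haq⟩ := pair_sublist_iff_exists_eq_append.1 hba
  obtain ⟨q₃, q₄, rfl⟩ := append_of_mem haq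
  have hb_pre : b ∉ p₁ ++ [a] :=
    fun h => disjoint_of_nodup_append (by simpa using hp) h hbp
  have hb_post : b ∉ a :: q₄ :=
    fun h => disjoint_of_nodup_append (l₁ := q₁ ++ b :: q₃) (by simpa using hq) (by simp) h
  have hr : IsWalkFromTo E x y (p₁ ++ a :: q₄) :=
    hpw.splice (show IsWalkFromTo E z y ((q₁ ++ b :: q₃) ++ a :: q₄) by simpa using hqw)
  obtain ⟨m, hm, hmw, hmr⟩ := hr.exists_nodup_subset
  rcases mem_append.1 (hmr (hb m hm hmw)) with h | h
  · exact hb_pre (mem_append_left _ h)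
  · exact hb_post h

theorem pair_sublist_of_pair_sublist {x y z a b : V} {p q : List V}
    (hb : ∀ r, r.Nodup → IsWalkFromTo E x y r → b ∈ r)
    (hp : p.Nodup) (hpw : IsWalkFromTo E x y p) (hq : q.Nodup) (hqw : IsWalkFromTo E z y q)
    (haq : a ∈ q) (hbq : b ∈ q) (hab : [a, b] <+ p) : [a, b] <+ q := by
  have hne : a ≠ b := by simpa using hp.sublist hab
  exact (pair_sublist_or_pair_sublist hne haq hbq).resolve_right
    (not_pair_sublist_of_forall_mem hb hp hpw hq hqw hab)

end Walks

theorem stmt_16_general {V : Type*} (E : V → V → Prop) (ι o : V)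
    (IsIOPath : List V → Prop)
    (hPath : ∀ p : List V, IsIOPath p ↔
      p.Nodup ∧ p.head? = some ι ∧ p.getLast? = some o ∧ List.Chain' E p)
    (SuperSimple : V → Prop)
    (hSS : ∀ v, SuperSimple v ↔ ∀ p : List V, IsIOPath p → v ∈ p)
    (ρ₁ ρ₂ : V) (h₁ : SuperSimple ρ₁) (h₂ : SuperSimple ρ₂)
    (p q : List V) (hp : IsIOPath p) (hq : IsIOPath q) :
    ((∃ i j : Fin p.length, (i : ℕ) < (j : ℕ) ∧ p.get i = ρ₁ ∧ p.get j = ρ₂) ↔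
      (∃ i j : Fin q.length, (i : ℕ) < (j : ℕ) ∧ q.get i = ρ₁ ∧ q.get j = ρ₂)) := by
  have hρ₂ : ∀ r, r.Nodup → IsWalkFromTo E ι o r → ρ₂ ∈ r :=
    fun r hr hrw => (hSS ρ₂).1 h₂ r ((hPath r).2 ⟨hr, hrw⟩)
  obtain ⟨hpn, hpw⟩ : p.Nodup ∧ IsWalkFromTo E ι o p := (hPath p).1 hp
  obtain ⟨hqn, hqw⟩ : q.Nodup ∧ IsWalkFromTo E ι o q := (hPath q).1 hq
  simp only [← List.pair_sublist_iff_exists_get]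
  exact ⟨pair_sublist_of_pair_sublist hρ₂ hpn hpw hqn hqw ((hSS ρ₁).1 h₁ q hq)
      ((hSS ρ₂).1 h₂ q hq),
    pair_sublist_of_pair_sublist hρ₂ hqn hqw hpn hpw ((hSS ρ₁).1 h₁ p hp)
      ((hSS ρ₂).1 h₂ p hp)⟩

/-- The order of appearance of super-simple nodes on an `ιo`-simple
path is independent of the chosen path: if `ρ₁`, `ρ₂` occur on every `ιo`-simple path,
then `ρ₁` occurs strictly before `ρ₂` on one `ιo`-simple path iff it does on any
other. -/
theorem stmt_16 {V : Type*} [Fintype V] (E : V → V → Prop) (ι o : V)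
    (IsIOPath : List V → Prop)
    (hPath : ∀ p : List V, IsIOPath p ↔
      p.Nodup ∧ p.head? = some ι ∧ p.getLast? = some o ∧ List.Chain' E p)
    (SuperSimple : V → Prop)
    (hSS : ∀ v, SuperSimple v ↔ ∀ p : List V, IsIOPath p → v ∈ p)
    (ρ₁ ρ₂ : V) (h₁ : SuperSimple ρ₁) (h₂ : SuperSimple ρ₂)
    (p q : List V) (hp : IsIOPath p) (hq : IsIOPath q) :
    ((∃ i j : Fin p.length, (i : ℕ) < (j : ℕ) ∧ p.get i = ρ₁ ∧ p.get j = ρ₂) ↔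
      (∃ i j : Fin q.length, (i : ℕ) < (j : ℕ) ∧ q.get i = ρ₁ ∧ q.get j = ρ₂)) :=
  stmt_16_general E ι o IsIOPath hPath SuperSimple hSS ρ₁ ρ₂ h₁ h₂ p q hp hq
end

section
/- Consider directed graphs on the vertex set {0, 1, 2} given by irreflexive relations E (no self-loops), with the vertex 0 playing the role of the input = output node ι, and satisfying the core condition: for every vertex v there is a directed walk from 0 to v and a directed walk from v to 0 (equivalently, every vertex lies on a closed directed walk through 0). Call two such graphs E and E' isomorphic if there is a permutation π of {0, 1, 2} with π(0) = 0 such that E'(π(u), π(v)) holds if and only if E(u, v) holds, for all u, v. Then there are exactly 10 isomorphism classes of such graphs. -/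
/-!
On three vertices a walk can be shortened to one of length at most two, so reachability, and
with it the core condition, is decidable. The classification is then a finite check: each of
the `2⁹` relations on `Fin 3` that is a core network is carried onto one of ten listed
networks by one of the two permutations fixing `0`, and no two of the ten are related in
this way.
-/

/-- A directed graph on `{0,1,2}` (irreflexive relation, no self-loops) which is a core
input = output network with distinguished node `0`: every vertex is reachable from `0`
by a directed walk and `0` is reachable from every vertex. -/
def IsCore3 (E : Fin 3 → Fin 3 → Prop) : Prop :=
  (∀ v, ¬ E v v) ∧
  ∀ v, Relation.ReflTransGen E 0 v ∧ Relation.ReflTransGen E v 0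

/-- Isomorphism of directed graphs on `{0,1,2}` fixing the distinguished node `0`. -/
def Iso3 (E E' : Fin 3 → Fin 3 → Prop) : Prop :=
  ∃ π : Equiv.Perm (Fin 3), π 0 = 0 ∧ ∀ u v, (E' (π u) (π v) ↔ E u v)

open Relation

theorem reflTransGen_iff_of_fin_three (r : Fin 3 → Fin 3 → Prop) (a b : Fin 3) :
    ReflTransGen r a b ↔ a = b ∨ r a b ∨ ∃ c, r a c ∧ r c b := by
  constructor
  · intro h
    induction h with
    | refl => exact Or.inl rfl
    | @tail b d _ hbd ih =>
      rcases ih with rfl | hab | ⟨c, hac, hcb⟩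
      · exact Or.inr (Or.inl hbd)
      · exact Or.inr (Or.inr ⟨b, hab, hbd⟩)
      · -- pigeonhole: two of the four vertices `a, c, b, d` of `Fin 3` coincide
        rcases (by omega : a = d ∨ c = d ∨ b = d ∨ a = c ∨ c = b ∨ a = b) with
          rfl | rfl | rfl | rfl | rfl | rfl
        · exact Or.inl rfl
        · exact Or.inr (Or.inl hac)
        · exact Or.inr (Or.inr ⟨c, hac, hcb⟩)
        · exact Or.inr (Or.inr ⟨b, hcb, hbd⟩)
        · exact Or.inr (Or.inr ⟨c, hac, hbd⟩)
        · exact Or.inr (Or.inl hbd)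
  · rintro (rfl | hab | ⟨c, hac, hcb⟩)
    · exact .refl
    · exact .single hab
    · exact .head hac (.single hcb)

theorem isCore3_iff (E : Fin 3 → Fin 3 → Prop) :
    IsCore3 E ↔ (∀ v, ¬ E v v) ∧
      ∀ v, (0 = v ∨ E 0 v ∨ ∃ c, E 0 c ∧ E c v) ∧ (v = 0 ∨ E v 0 ∨ ∃ c, E v c ∧ E c 0) := by
  simp only [IsCore3, reflTransGen_iff_of_fin_three]

instance (E : Fin 3 → Fin 3 → Prop) [DecidableRel E] : Decidable (IsCore3 E) :=
  decidable_of_iff' _ (isCore3_iff E)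

instance (E E' : Fin 3 → Fin 3 → Prop) [DecidableRel E] [DecidableRel E'] :
    Decidable (Iso3 E E') :=
  inferInstanceAs (Decidable (∃ π : Equiv.Perm (Fin 3), π 0 = 0 ∧ ∀ u v, (E' (π u) (π v) ↔ E u v)))

def coreRepEdges : Fin 10 → List (Fin 3 × Fin 3) :=
  ![[(0, 2), (1, 2), (2, 0), (2, 1)],
    [(0, 2), (1, 0), (2, 1)],
    [(0, 2), (1, 0), (2, 0), (2, 1)],
    [(0, 2), (1, 0), (1, 2), (2, 1)],
    [(0, 2), (1, 0), (1, 2), (2, 0), (2, 1)],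
    [(0, 1), (0, 2), (1, 2), (2, 0)],
    [(0, 1), (0, 2), (1, 2), (2, 0), (2, 1)],
    [(0, 1), (0, 2), (1, 0), (2, 0)],
    [(0, 1), (0, 2), (1, 0), (2, 0), (2, 1)],
    [(0, 1), (0, 2), (1, 0), (1, 2), (2, 0), (2, 1)]]

def coreRep (i : Fin 10) (u v : Fin 3) : Prop :=
  (u, v) ∈ coreRepEdges i

instance (i : Fin 10) : DecidableRel (coreRep i) :=
  fun u v => inferInstanceAs (Decidable ((u, v) ∈ coreRepEdges i))

theorem isCore3_coreRep : ∀ i, IsCore3 (coreRep i) := by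
  decide

theorem not_iso3_coreRep : ∀ i j, i ≠ j → ¬ Iso3 (coreRep i) (coreRep j) := by
  decide

set_option maxRecDepth 100000 in
theorem exists_iso3_coreRep_of_bool (B : Fin 3 → Fin 3 → Bool) :
    IsCore3 (fun u v => B u v) → ∃ i, Iso3 (fun u v => B u v) (coreRep i) := by
  revert B
  decide

/-- There are exactly `10` isomorphism classes of `3`-node
input = output core networks: there exist `10` core networks, pairwise non-isomorphic,
such that every core network is isomorphic to one of them. -/
theorem stmt_17 :
    ∃ reps : Fin 10 → (Fin 3 → Fin 3 → Prop),
      (∀ i, IsCore3 (reps i)) ∧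
      (∀ i j, i ≠ j → ¬ Iso3 (reps i) (reps j)) ∧
      (∀ E : Fin 3 → Fin 3 → Prop, IsCore3 E → ∃ i, Iso3 E (reps i)) := by
  classical
  refine ⟨coreRep, isCore3_coreRep, not_iso3_coreRep, fun E hE => ?_⟩
  have hE_bool : E = fun u v => decide (E u v) = true := by
    funext u v
    simp only [decide_eq_true_eq]
  rw [hE_bool] at hE ⊢
  exact exists_iso3_coreRep_of_bool _ hE
end

section
/- Let F : ℝⁿ × ℝ → ℝⁿ be continuously differentiable, let X : ℝ × ℝ → ℝⁿ, (t, I) ↦ X(t, I), be continuously differentiable with ∂X/∂t(t, I) = F(X(t, I), I) for all t and all I near I₀, and let τ be a function differentiable at I₀ with τ(I) > 0 and X(t + τ(I), I) = X(t, I) for all t and all I near I₀ (a family of periodic solutions with period τ(I)). Write τ₀ = τ(I₀), X₀(t) = X(t, I₀), and A(t) = D_X F(X₀(t), I₀). Let w* : ℝ → ℝⁿ be differentiable with (w*)'(t) = −A(t)ᵀ w*(t) for all t, w*(t + τ₀) = w*(t) for all t, and the normalization ⟨∂X/∂t(t, I₀), w*(t)⟩ = 1 for all t. Then the derivative of the period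 satisfies τ'(I₀) = −∫₀^{τ₀} ⟨F_I(X₀(t), I₀), w*(t)⟩ dt, where F_I denotes the partial derivative of F with respect to the parameter I and ⟨·,·⟩ is the Euclidean inner product on ℝⁿ. -/
/-!
Let `Y = ∂X/∂I (·, I₀)`. Differentiating the integral form
`X(t, I) = X(0, I) + ∫₀ᵗ F(X(s, I), I) ds` under the integral sign shows that `Y` solves the
inhomogeneous variational equation `Y' = A Y + F_I` (`X` is only `C¹`, so the mixed partial
derivatives cannot simply be exchanged). Pairing with the adjoint solution `w*` cancels the
homogeneous part, so `⟨Y, w*⟩' = ⟨F_I, w*⟩`, and by periodicity of `w*` the integral over one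
period is `⟨Y(τ₀) - Y(0), w*(τ₀)⟩`. Differentiating `X(τ(I), I) = X(0, I)` at `I₀` gives
`Y(0) - Y(τ₀) = τ'(I₀) ∂X/∂t(τ₀, I₀)`, and the normalization turns the integral into `-τ'(I₀)`.
-/

open MeasureTheory Filter Topology

variable {E V : Type*} [NormedAddCommGroup E] [NormedSpace ℝ E]
  [NormedAddCommGroup V] [NormedSpace ℝ V]

theorem DifferentiableAt.hasDerivAt_comp_prodMk {W : Type*} [NormedAddCommGroup W]
    [NormedSpace ℝ W] {Φ : V × W → E} {g : ℝ → V} {h : ℝ → W} {g' : V} {h' : W} {x : ℝ}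
    (hΦ : DifferentiableAt ℝ Φ (g x, h x)) (hg : HasDerivAt g g' x) (hh : HasDerivAt h h' x) :
    HasDerivAt (fun r => Φ (g r, h r)) (fderiv ℝ Φ (g x, h x) (g', h')) x :=
  hΦ.hasFDerivAt.comp_hasDerivAt x (hg.prodMk hh)

theorem DifferentiableAt.fderiv_apply_eq_fderiv_slice_add {f : V × ℝ → E} {x : V} {I : ℝ}
    (hf : DifferentiableAt ℝ f (x, I)) (y : V) :
    fderiv ℝ f (x, I) (y, 1) = fderiv ℝ (fun x => f (x, I)) x y + fderiv ℝ f (x, I) (0, 1) := by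
  have hslice : HasFDerivAt (fun x => f (x, I))
      ((fderiv ℝ f (x, I)).comp (ContinuousLinearMap.inl ℝ V ℝ)) x :=
    hf.hasFDerivAt.comp x (hasFDerivAt_prodMk_left x I)
  rw [hslice.fderiv, ContinuousLinearMap.comp_apply, ContinuousLinearMap.inl_apply,
    ← map_add, Prod.mk_add_mk, add_zero, zero_add]

theorem hasDerivAt_intervalIntegral_of_continuous_deriv [CompleteSpace E] {G G' : ℝ → ℝ → E}
    (hG : ∀ I, Continuous (G I)) (hG' : Continuous (Function.uncurry G'))
    (hderiv : ∀ I s, HasDerivAt (fun J => G J s) (G' I s) I) (a b I₀ : ℝ) :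
    HasDerivAt (fun I => ∫ s in a..b, G I s) (∫ s in a..b, G' I₀ s) I₀ := by
  obtain ⟨C, hC⟩ := ((isCompact_closedBall I₀ 1).prod isCompact_uIcc).exists_bound_of_continuousOn
    hG'.continuousOn
  exact (intervalIntegral.hasDerivAt_integral_of_dominated_loc_of_deriv_le
    (bound := fun _ => C) (Metric.ball_mem_nhds I₀ one_pos)
    (.of_forall fun I => (hG I).aestronglyMeasurable.restrict)
    ((hG I₀).intervalIntegrable a b)
    (hG'.comp (Continuous.prodMk_right I₀)).aestronglyMeasurable.restrict
    (.of_forall fun s hs I hI =>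
      hC (I, s) ⟨Metric.ball_subset_closedBall hI, Set.uIoc_subset_uIcc hs⟩)
    intervalIntegrable_const (.of_forall fun s _ I _ => hderiv I s)).2

theorem hasDerivAt_paramDeriv_of_hasDerivAt_flow [CompleteSpace E] {f : E × ℝ → E}
    {Φ : ℝ × ℝ → E} (hf : ContDiff ℝ 1 f) (hΦ : ContDiff ℝ 1 Φ) {I₀ : ℝ}
    (hode : ∀ᶠ I in 𝓝 I₀, ∀ t, HasDerivAt (fun s => Φ (s, I)) (f (Φ (t, I), I)) t) (t : ℝ) :
    HasDerivAt (fun s => fderiv ℝ Φ (s, I₀) (0, 1))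
      (fderiv ℝ f (Φ (t, I₀), I₀) (fderiv ℝ Φ (t, I₀) (0, 1), 1)) t := by
  set Y : ℝ → E := fun s => fderiv ℝ Φ (s, I₀) (0, 1)
  set u : ℝ → ℝ → E := fun I s => fderiv ℝ f (Φ (s, I), I) (fderiv ℝ Φ (s, I) (0, 1), 1)
  have hY : ∀ s I, HasDerivAt (fun J => Φ (s, J)) (fderiv ℝ Φ (s, I) (0, 1)) I := fun s I =>
    (hΦ.differentiable one_ne_zero _).hasDerivAt_comp_prodMk (hasDerivAt_const I s)
      (hasDerivAt_id' I)
  have hrhs : ∀ I, Continuous fun s => f (Φ (s, I), I) := fun I =>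
    hf.continuous.comp₂ (hΦ.continuous.comp₂ continuous_id continuous_const) continuous_const
  have hu : Continuous (Function.uncurry u) :=
    (hf.continuous_fderiv one_ne_zero).comp₂ (hΦ.continuous.comp continuous_swap) continuous_fst
      |>.clm_apply (((hΦ.continuous_fderiv one_ne_zero).comp continuous_swap).clm_apply
        continuous_const |>.prodMk continuous_const)
  have hintegral : ∀ s, Y s = Y 0 + ∫ r in (0 : ℝ)..s, u I₀ r := by
    intro s
    have hflow : (fun I => Φ (s, I)) =ᶠ[𝓝 I₀]
        fun I => Φ (0, I) + ∫ r in (0 : ℝ)..s, f (Φ (r, I), I) := by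
      filter_upwards [hode] with I hI
      rw [intervalIntegral.integral_eq_sub_of_hasDerivAt (fun r _ => hI r)
        ((hrhs I).intervalIntegrable 0 s)]
      abel
    have hderiv : HasDerivAt (fun I => Φ (0, I) + ∫ r in (0 : ℝ)..s, f (Φ (r, I), I))
        (Y 0 + ∫ r in (0 : ℝ)..s, u I₀ r) I₀ :=
      (hY 0 I₀).add (hasDerivAt_intervalIntegral_of_continuous_deriv hrhs hu
        (fun I r => (hf.differentiable one_ne_zero _).hasDerivAt_comp_prodMk (hY r I)
          (hasDerivAt_id' I)) 0 s I₀)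
    exact (hY s I₀).unique (hderiv.congr_of_eventuallyEq hflow)
  rw [show Y = fun s => Y 0 + ∫ r in (0 : ℝ)..s, u I₀ r from funext hintegral]
  exact ((hu.comp (Continuous.prodMk_right I₀)).integral_hasStrictDerivAt 0 t).hasDerivAt.const_add _

theorem hasDerivAt_inner_of_adjoint_equation {H : Type*} [NormedAddCommGroup H]
    [InnerProductSpace ℝ H] [CompleteSpace H] {A : H →L[ℝ] H} {y w : ℝ → H} {b : H} {t : ℝ}
    (hy : HasDerivAt y (A (y t) + b) t) (hw : HasDerivAt w (-(A.adjoint (w t))) t) :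
    HasDerivAt (fun s => inner ℝ (y s) (w s)) (inner ℝ b (w t)) t := by
  refine (hy.inner ℝ hw).congr_deriv ?_
  rw [inner_neg_right, ContinuousLinearMap.adjoint_inner_right, inner_add_left]
  ring

theorem fderiv_eq_smul_add_of_periodic {Φ : ℝ × ℝ → E} {τ : ℝ → ℝ} {I₀ : ℝ}
    (hΦ₀ : DifferentiableAt ℝ Φ (0, I₀)) (hΦτ : DifferentiableAt ℝ Φ (τ I₀, I₀))
    (hτ : DifferentiableAt ℝ τ I₀) (hper : ∀ᶠ I in 𝓝 I₀, Φ (τ I, I) = Φ (0, I)) :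
    fderiv ℝ Φ (0, I₀) (0, 1) =
      deriv τ I₀ • fderiv ℝ Φ (τ I₀, I₀) (1, 0) + fderiv ℝ Φ (τ I₀, I₀) (0, 1) := by
  have hleft : HasDerivAt (fun I => Φ (τ I, I)) (fderiv ℝ Φ (τ I₀, I₀) (deriv τ I₀, 1)) I₀ :=
    hΦτ.hasDerivAt_comp_prodMk hτ.hasDerivAt (hasDerivAt_id' I₀)
  have hright : HasDerivAt (fun I => Φ (0, I)) (fderiv ℝ Φ (0, I₀) (0, 1)) I₀ :=
    hΦ₀.hasDerivAt_comp_prodMk (hasDerivAt_const I₀ 0) (hasDerivAt_id' I₀)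
  rw [hright.unique (hleft.congr_of_eventuallyEq (hper.mono fun I hI => hI.symm)),
    ← map_smul, ← map_add, Prod.smul_mk, smul_zero, smul_eq_mul, mul_one, Prod.mk_add_mk,
    add_zero, zero_add]

theorem stmt_18_general (n : ℕ)
    (F : EuclideanSpace ℝ (Fin n) × ℝ → EuclideanSpace ℝ (Fin n))
    (hF : ContDiff ℝ 1 F)
    (I₀ : ℝ) (U : Set ℝ) (hU : U ∈ nhds I₀)
    (X : ℝ → ℝ → EuclideanSpace ℝ (Fin n))
    (hX : ContDiff ℝ 1 (fun p : ℝ × ℝ => X p.1 p.2))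
    (hODE : ∀ t : ℝ, ∀ I ∈ U, HasDerivAt (fun s => X s I) (F (X t I, I)) t)
    (τ : ℝ → ℝ) (hτdiff : DifferentiableAt ℝ τ I₀)
    (hper : ∀ t : ℝ, ∀ I ∈ U, X (t + τ I) I = X t I)
    (A : ℝ → EuclideanSpace ℝ (Fin n) →L[ℝ] EuclideanSpace ℝ (Fin n))
    (hA : ∀ t, A t = fderiv ℝ (fun x => F (x, I₀)) (X t I₀))
    (wstar : ℝ → EuclideanSpace ℝ (Fin n))
    (hw : ∀ t, HasDerivAt wstar (-(ContinuousLinearMap.adjoint (A t) (wstar t))) t)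
    (hwper : ∀ t, wstar (t + τ I₀) = wstar t)
    (hnorm : ∀ t, (inner ℝ (deriv (fun s => X s I₀) t) (wstar t) : ℝ) = 1) :
    deriv τ I₀ =
      -∫ t in (0 : ℝ)..(τ I₀),
        (inner ℝ (fderiv ℝ F (X t I₀, I₀) (0, 1)) (wstar t) : ℝ) := by
  set Φ : ℝ × ℝ → EuclideanSpace ℝ (Fin n) := fun p => X p.1 p.2
  set Y : ℝ → EuclideanSpace ℝ (Fin n) := fun t => fderiv ℝ Φ (t, I₀) (0, 1)
  have hΦd : Differentiable ℝ Φ := hX.differentiable one_ne_zero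
  have hpairing : ∀ t, HasDerivAt (fun s => inner ℝ (Y s) (wstar s))
      (inner ℝ (fderiv ℝ F (X t I₀, I₀) (0, 1)) (wstar t) : ℝ) t := fun t =>
    hasDerivAt_inner_of_adjoint_equation (A := A t) (by
      rw [hA, ← (hF.differentiable one_ne_zero _).fderiv_apply_eq_fderiv_slice_add]
      exact hasDerivAt_paramDeriv_of_hasDerivAt_flow hF hX
        (eventually_of_mem hU fun I hI t => hODE t I hI) t) (hw t)
  have hperiod : Y 0 = deriv τ I₀ • deriv (fun s => X s I₀) (τ I₀) + Y (τ I₀) := by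
    rw [((hΦd _).hasDerivAt_comp_prodMk (hasDerivAt_id' (τ I₀)) (hasDerivAt_const _ I₀)).deriv]
    exact fderiv_eq_smul_add_of_periodic (hΦd _) (hΦd _) hτdiff
      (eventually_of_mem hU fun I hI => by simpa using hper 0 I hI)
  have hcont : Continuous fun t => (inner ℝ (fderiv ℝ F (X t I₀, I₀) (0, 1)) (wstar t) : ℝ) :=
    (((hF.continuous_fderiv one_ne_zero).comp (hX.continuous.comp₂ continuous_id continuous_const
      |>.prodMk continuous_const)).clm_apply continuous_const).inner
      (continuous_iff_continuousAt.2 fun t => (hw t).continuousAt)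
  rw [intervalIntegral.integral_eq_sub_of_hasDerivAt (fun t _ => hpairing t)
    (hcont.intervalIntegrable 0 (τ I₀)), hperiod, ← hwper 0, zero_add, inner_add_left,
    inner_smul_left, hnorm]
  simp

/-- Formula for the derivative of the period input-output function:
for a `C¹` family of periodic solutions `X(t, I)` of `dX/dt = F(X, I)` with period
`τ(I)`, and `w*` the `τ₀`-periodic, suitably normalized solution of the adjoint Floquet
equation along `X₀ = X(·, I₀)`, one has
`τ'(I₀) = −∫₀^{τ₀} ⟨F_I(X₀(t), I₀), w*(t)⟩ dt`. -/
theorem stmt_18 (n : ℕ)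
    (F : EuclideanSpace ℝ (Fin n) × ℝ → EuclideanSpace ℝ (Fin n))
    (hF : ContDiff ℝ 1 F)
    (I₀ : ℝ) (U : Set ℝ) (hU : U ∈ nhds I₀)
    (X : ℝ → ℝ → EuclideanSpace ℝ (Fin n))
    (hX : ContDiff ℝ 1 (fun p : ℝ × ℝ => X p.1 p.2))
    (hODE : ∀ t : ℝ, ∀ I ∈ U, HasDerivAt (fun s => X s I) (F (X t I, I)) t)
    (τ : ℝ → ℝ) (hτdiff : DifferentiableAt ℝ τ I₀)
    (hτpos : ∀ I ∈ U, 0 < τ I)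
    (hper : ∀ t : ℝ, ∀ I ∈ U, X (t + τ I) I = X t I)
    (A : ℝ → EuclideanSpace ℝ (Fin n) →L[ℝ] EuclideanSpace ℝ (Fin n))
    (hA : ∀ t, A t = fderiv ℝ (fun x => F (x, I₀)) (X t I₀))
    (wstar : ℝ → EuclideanSpace ℝ (Fin n))
    (hw : ∀ t, HasDerivAt wstar (-(ContinuousLinearMap.adjoint (A t) (wstar t))) t)
    (hwper : ∀ t, wstar (t + τ I₀) = wstar t)
    (hnorm : ∀ t, (inner ℝ (deriv (fun s => X s I₀) t) (wstar t) : ℝ) = 1) :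
    deriv τ I₀ =
      -∫ t in (0 : ℝ)..(τ I₀),
        (inner ℝ (fderiv ℝ F (X t I₀, I₀) (0, 1)) (wstar t) : ℝ) :=
  stmt_18_general n F hF I₀ U hU X hX hODE τ hτdiff hper A hA wstar hw hwper hnorm
end

section
/- Let g₁, g₂, g₃, g₄, g₅, f : ℝ → ℝ be continuously differentiable and consider the product inhibition system ẋ = I − g₄(x) − f(z)g₁(x), ẏ = f(z)g₁(x) − g₂(y) − g₅(y), ż = g₂(y) − g₃(z). Assume f(z) > 0 for all z, g₁'(x) < 0 for all x, and g₂'(y) < 0 for all y. Then for any continuously differentiable family of equilibria (x(I), y(I), z(I)) on an open interval whose 3×3 Jacobian is invertible at every I, one has z'(I) ≠ 0 for every I; that is, the product inhibition model cannot exhibit infinitesimal homeostasis. -/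
/-!
At `z' = 0` the linearized equilibrium equations can be solved backwards: the `z`-equation
forces `y' = 0` since `g₂' ≠ 0`, then the `y`-equation forces `x' = 0` since `f g₁' ≠ 0`, and
the `x`-equation becomes `1 = 0`. This back-substitution is the nonvanishing of the homeostasis
determinant `f(z) g₁'(x) g₂'(y)`.
-/

theorem HasDerivAt.eq_zero_of_eventuallyEq_zero {𝕜 E : Type*} [NontriviallyNormedField 𝕜]
    [NormedAddCommGroup E] [NormedSpace 𝕜 E] {F : 𝕜 → E} {F' : E} {t : 𝕜}
    (hF : HasDerivAt F F' t) (hF0 : F =ᶠ[nhds t] 0) : F' = 0 :=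
  hF.unique ((hasDerivAt_const t 0).congr_of_eventuallyEq hF0)

theorem productInhibition_linearized_output_ne_zero {x' y' z' a₁ a₂ a₃ a₄ a₅ fz fz' g : ℝ}
    (hfz : fz ≠ 0) (ha₁ : a₁ ≠ 0) (ha₂ : a₂ ≠ 0)
    (e₁ : 1 - a₄ * x' - (fz' * z' * g + fz * (a₁ * x')) = 0)
    (e₂ : fz' * z' * g + fz * (a₁ * x') - a₂ * y' - a₅ * y' = 0)
    (e₃ : a₂ * y' - a₃ * z' = 0) :
    z' ≠ 0 := by
  intro hz
  have hy : y' = 0 := by simpa [hz, ha₂] using e₃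
  have hx : x' = 0 := by simpa [hz, hy, hfz, ha₁] using e₂
  simp [hz, hx] at e₁

theorem stmt_19_general (g₁ g₂ g₃ g₄ g₅ f : ℝ → ℝ)
    (hg₁ : ContDiff ℝ 1 g₁) (hg₂ : ContDiff ℝ 1 g₂) (hg₃ : ContDiff ℝ 1 g₃)
    (hg₄ : ContDiff ℝ 1 g₄) (hg₅ : ContDiff ℝ 1 g₅) (hf : ContDiff ℝ 1 f)
    (hfpos : ∀ u : ℝ, 0 < f u)
    (hg₁' : ∀ u : ℝ, deriv g₁ u < 0)
    (hg₂' : ∀ u : ℝ, deriv g₂ u < 0)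
    (Ω : Set ℝ) (hΩ : IsOpen Ω)
    (x y z : ℝ → ℝ)
    (hx : ContDiffOn ℝ 1 x Ω) (hy : ContDiffOn ℝ 1 y Ω) (hz : ContDiffOn ℝ 1 z Ω)
    (heq1 : ∀ I ∈ Ω, I - g₄ (x I) - f (z I) * g₁ (x I) = 0)
    (heq2 : ∀ I ∈ Ω, f (z I) * g₁ (x I) - g₂ (y I) - g₅ (y I) = 0)
    (heq3 : ∀ I ∈ Ω, g₂ (y I) - g₃ (z I) = 0) :
    ∀ I ∈ Ω, deriv z I ≠ 0 := by
  intro I hI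
  have hΩI : Ω ∈ nhds I := hΩ.mem_nhds hI
  have chain : ∀ {g u : ℝ → ℝ}, ContDiff ℝ 1 g → ContDiffOn ℝ 1 u Ω →
      HasDerivAt (fun t ↦ g (u t)) (deriv g (u I) * deriv u I) I := fun hg hu ↦
    (hg.differentiable one_ne_zero _).hasDerivAt.comp I
      ((hu.contDiffAt hΩI).differentiableAt one_ne_zero).hasDerivAt
  have e₁ := (((hasDerivAt_id I).sub (chain hg₄ hx)).sub
    ((chain hf hz).mul (chain hg₁ hx))).eq_zero_of_eventuallyEq_zero
      (Filter.eventually_of_mem hΩI heq1)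
  have e₂ := ((((chain hf hz).mul (chain hg₁ hx)).sub (chain hg₂ hy)).sub
    (chain hg₅ hy)).eq_zero_of_eventuallyEq_zero (Filter.eventually_of_mem hΩI heq2)
  have e₃ := ((chain hg₂ hy).sub (chain hg₃ hz)).eq_zero_of_eventuallyEq_zero
    (Filter.eventually_of_mem hΩI heq3)
  exact productInhibition_linearized_output_ne_zero (hfpos _).ne' (hg₁' _).ne (hg₂' _).ne
    e₁ e₂ e₃

/-- (Product inhibition cannot exhibit infinitesimal homeostasis.)
For the system `ẋ = I − g₄(x) − f(z)g₁(x)`, `ẏ = f(z)g₁(x) − g₂(y) − g₅(y)`,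
`ż = g₂(y) − g₃(z)` with `f > 0`, `g₁' < 0`, `g₂' < 0`, along any `C¹` family of
equilibria on an open interval whose Jacobian is invertible at every `I`, the output
derivative `z'(I)` never vanishes. -/
theorem stmt_19 (g₁ g₂ g₃ g₄ g₅ f : ℝ → ℝ)
    (hg₁ : ContDiff ℝ 1 g₁) (hg₂ : ContDiff ℝ 1 g₂) (hg₃ : ContDiff ℝ 1 g₃)
    (hg₄ : ContDiff ℝ 1 g₄) (hg₅ : ContDiff ℝ 1 g₅) (hf : ContDiff ℝ 1 f)
    (hfpos : ∀ u : ℝ, 0 < f u)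
    (hg₁' : ∀ u : ℝ, deriv g₁ u < 0)
    (hg₂' : ∀ u : ℝ, deriv g₂ u < 0)
    (Ω : Set ℝ) (hΩ : IsOpen Ω) (hΩ' : Ω.OrdConnected)
    (x y z : ℝ → ℝ)
    (hx : ContDiffOn ℝ 1 x Ω) (hy : ContDiffOn ℝ 1 y Ω) (hz : ContDiffOn ℝ 1 z Ω)
    (heq1 : ∀ I ∈ Ω, I - g₄ (x I) - f (z I) * g₁ (x I) = 0)
    (heq2 : ∀ I ∈ Ω, f (z I) * g₁ (x I) - g₂ (y I) - g₅ (y I) = 0)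
    (heq3 : ∀ I ∈ Ω, g₂ (y I) - g₃ (z I) = 0)
    (hJ : ∀ I ∈ Ω,
      (!![-(deriv g₄ (x I)) - f (z I) * deriv g₁ (x I), 0, -(deriv f (z I)) * g₁ (x I);
          f (z I) * deriv g₁ (x I), -(deriv g₂ (y I)) - deriv g₅ (y I),
            deriv f (z I) * g₁ (x I);
          0, deriv g₂ (y I), -(deriv g₃ (z I))]).det ≠ 0) :
    ∀ I ∈ Ω, deriv z I ≠ 0 :=
  stmt_19_general g₁ g₂ g₃ g₄ g₅ f hg₁ hg₂ hg₃ hg₄ hg₅ hf hfpos hg₁' hg₂' Ω hΩ x y z hx hy hz heq1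
    heq2 heq3
end
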